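/- arXiv:1512.00551 — 2 statements merged into one kernel-verified Lean document; each statement's English description precedes it below -/
import Mathlib

section
/- Let ξ₁, ξ₂ ∈ ℝ^d with ξ₃ = ξ₁ - ξ₂ and τ₁, τ₂ ∈ ℝ with τ₃ = τ₁ - τ₂. If |ξ₁| ≥ 4(1 + |ξ₂|), then max{|τ₁ + |ξ₁|²|, |τ₂ + |ξ₂|²|, |τ₃ + |ξ₃||} ≥ c·max{|ξ₁|², |ξ₂|²} for some absolute constant c > 0 (one may take c = 1/16). -/
/-- Resonance estimate for the Schrödinger–wave interaction (high `ξ₁` case, `+` sign). -/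
theorem stmt0 :
    ∃ c : ℝ, 0 < c ∧ c = 1 / 16 ∧
      ∀ (d : ℕ) (ξ₁ ξ₂ : EuclideanSpace ℝ (Fin d)) (τ₁ τ₂ : ℝ),
        4 * (1 + ‖ξ₂‖) ≤ ‖ξ₁‖ →
        c * max (‖ξ₁‖ ^ 2) (‖ξ₂‖ ^ 2) ≤
          max (max |τ₁ + ‖ξ₁‖ ^ 2| |τ₂ + ‖ξ₂‖ ^ 2|) |(τ₁ - τ₂) + ‖ξ₁ - ξ₂‖| := by
  refine ⟨1 / 16, by norm_num, rfl, ?_⟩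
  intro d ξ₁ ξ₂ τ₁ τ₂ h
  have h0 : (0:ℝ) ≤ ‖ξ₂‖ := norm_nonneg _
  have h3 : ‖ξ₁ - ξ₂‖ ≤ ‖ξ₁‖ + ‖ξ₂‖ := norm_sub_le _ _
  have hle : ‖ξ₂‖ ^ 2 ≤ ‖ξ₁‖ ^ 2 := by nlinarith
  rw [max_eq_left hle]
  set M := max (max |τ₁ + ‖ξ₁‖ ^ 2| |τ₂ + ‖ξ₂‖ ^ 2|) |(τ₁ - τ₂) + ‖ξ₁ - ξ₂‖| with hM
  have hA : τ₁ + ‖ξ₁‖ ^ 2 ≤ M :=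
    le_trans (le_abs_self _) (le_trans (le_max_left _ _) (le_max_left _ _))
  have hB : -(τ₂ + ‖ξ₂‖ ^ 2) ≤ M :=
    le_trans (neg_le_abs _) (le_trans (le_max_right _ _) (le_max_left _ _))
  have hC : -((τ₁ - τ₂) + ‖ξ₁ - ξ₂‖) ≤ M := le_trans (neg_le_abs _) (le_max_right _ _)
  nlinarith [h, h0, h3, hA, hB, hC]
end

section
/- Let ξ₁, ξ₂ ∈ ℝ^d with ξ₃ = ξ₁ - ξ₂ and τ₁, τ₂ ∈ ℝ with τ₃ = τ₁ - τ₂. If |ξ₂| ≥ 4(1 + |ξ₁|), then max{|τ₁ + |ξ₁|²|, |τ₂ + |ξ₂|²|, |τ₃ − |ξ₃||} ≥ c·|ξ₂|² for some absolute constant c > 0. -/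
/-- Resonance estimate for the Schrödinger–wave interaction (high `ξ₂` case, `-` sign). -/
theorem stmt1 :
    ∃ c : ℝ, 0 < c ∧
      ∀ (d : ℕ) (ξ₁ ξ₂ : EuclideanSpace ℝ (Fin d)) (τ₁ τ₂ : ℝ),
        4 * (1 + ‖ξ₁‖) ≤ ‖ξ₂‖ →
        c * ‖ξ₂‖ ^ 2 ≤
          max (max |τ₁ + ‖ξ₁‖ ^ 2| |τ₂ + ‖ξ₂‖ ^ 2|) |(τ₁ - τ₂) - ‖ξ₁ - ξ₂‖| := by
  refine ⟨1/8, by norm_num, ?_⟩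
  intro d ξ₁ ξ₂ τ₁ τ₂ h
  set a := |τ₁ + ‖ξ₁‖ ^ 2|
  set b := |τ₂ + ‖ξ₂‖ ^ 2|
  set w := |(τ₁ - τ₂) - ‖ξ₁ - ξ₂‖|
  have ha : a ≤ max (max a b) w := le_max_of_le_left (le_max_left _ _)
  have hb : b ≤ max (max a b) w := le_max_of_le_left (le_max_right _ _)
  have hw : w ≤ max (max a b) w := le_max_right _ _
  have hn1 : (0:ℝ) ≤ ‖ξ₁‖ := norm_nonneg _
  have hn2 : (0:ℝ) ≤ ‖ξ₂‖ := norm_nonneg _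
  have htri : ‖ξ₁ - ξ₂‖ ≤ ‖ξ₁‖ + ‖ξ₂‖ := norm_sub_le _ _
  have htri' : (0:ℝ) ≤ ‖ξ₁ - ξ₂‖ := norm_nonneg _
  have hkey : ‖ξ₁‖ ^ 2 - ‖ξ₂‖ ^ 2 + ‖ξ₁ - ξ₂‖ ≤ a + b + w := by
    have : ‖ξ₁‖ ^ 2 - ‖ξ₂‖ ^ 2 + ‖ξ₁ - ξ₂‖ =
        (τ₁ + ‖ξ₁‖ ^ 2) - (τ₂ + ‖ξ₂‖ ^ 2) - ((τ₁ - τ₂) - ‖ξ₁ - ξ₂‖) := by ring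
    rw [this]
    calc (τ₁ + ‖ξ₁‖ ^ 2) - (τ₂ + ‖ξ₂‖ ^ 2) - ((τ₁ - τ₂) - ‖ξ₁ - ξ₂‖)
        ≤ |(τ₁ + ‖ξ₁‖ ^ 2) - (τ₂ + ‖ξ₂‖ ^ 2) - ((τ₁ - τ₂) - ‖ξ₁ - ξ₂‖)| := le_abs_self _
      _ ≤ |(τ₁ + ‖ξ₁‖ ^ 2) - (τ₂ + ‖ξ₂‖ ^ 2)| + |(τ₁ - τ₂) - ‖ξ₁ - ξ₂‖| := abs_sub _ _
      _ ≤ (a + b) + w := by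
          gcongr
          exact abs_sub _ _
  have hkey2 : ‖ξ₂‖ ^ 2 - ‖ξ₁‖ ^ 2 - ‖ξ₁ - ξ₂‖ ≤ a + b + w := by
    have : ‖ξ₂‖ ^ 2 - ‖ξ₁‖ ^ 2 - ‖ξ₁ - ξ₂‖ =
        -((τ₁ + ‖ξ₁‖ ^ 2) - (τ₂ + ‖ξ₂‖ ^ 2) - ((τ₁ - τ₂) - ‖ξ₁ - ξ₂‖)) := by ring
    rw [this]
    calc -((τ₁ + ‖ξ₁‖ ^ 2) - (τ₂ + ‖ξ₂‖ ^ 2) - ((τ₁ - τ₂) - ‖ξ₁ - ξ₂‖))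
        ≤ |(τ₁ + ‖ξ₁‖ ^ 2) - (τ₂ + ‖ξ₂‖ ^ 2) - ((τ₁ - τ₂) - ‖ξ₁ - ξ₂‖)| := neg_le_abs _
      _ ≤ |(τ₁ + ‖ξ₁‖ ^ 2) - (τ₂ + ‖ξ₂‖ ^ 2)| + |(τ₁ - τ₂) - ‖ξ₁ - ξ₂‖| := abs_sub _ _
      _ ≤ (a + b) + w := by
          gcongr
          exact abs_sub _ _
  have h1 : ‖ξ₁‖ ≤ ‖ξ₂‖ / 4 - 1 := by linarith
  have h4 : (4:ℝ) ≤ ‖ξ₂‖ := by nlinarith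
  nlinarith [sq_nonneg (‖ξ₂‖ - 4), sq_nonneg ‖ξ₁‖, mul_le_mul_of_nonneg_left h1 hn1]
end
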